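/- arXiv:1111.0408 — 6 statements merged into one kernel-verified Lean document; each statement's English description precedes it below -/
import Mathlib

section
/- For every α ∈ (0,1] and x ≠ 0, the fractional heat profile admits the representation p_α(x) = (1/(π |x|^{1+2α})) ∫_0^∞ e^{-u |x|^{-2α}} sin(u^{1/(2α)}) du. -/
/-! Because `exp (-|ξ|^(2α))` is even, the Fourier integral reduces to the cosine transform
`2 ∫₀^∞ exp (-t^(2α)) cos (|x| t) dt`. One integration by parts trades the cosine for
`sin (|x| t)` against `2α t^(2α-1) exp (-t^(2α))`, and the substitution `u = (|x| t)^(2α)`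
turns the result into the stated integral. -/

open MeasureTheory Real Set

/-- The one-dimensional fractional heat profile, the inverse Fourier transform of
`ξ ↦ exp (-|ξ|^(2α))`. -/
noncomputable def fracHeatProfile (α : ℝ) (x : ℝ) : ℂ :=
  (1 / (2 * Real.pi) : ℂ) *
    ∫ ξ : ℝ, Complex.exp (-((|ξ| ^ (2 * α) : ℝ) : ℂ)) *
      Complex.exp (Complex.I * (x : ℂ) * (ξ : ℂ))

open Filter Topology
open scoped Complex

lemma integrableOn_exp_neg_rpow {p : ℝ} (hp : 0 < p) :
    IntegrableOn (fun t : ℝ => rexp (-t ^ p)) (Ioi 0) := by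
  simpa using integrableOn_rpow_mul_exp_neg_rpow (s := 0) (by norm_num) hp

lemma MeasureTheory.IntegrableOn.integrable_comp_abs {E : Type*} [NormedAddCommGroup E]
    {f : ℝ → E} (hf : IntegrableOn f (Ioi 0)) : Integrable (fun x => f |x|) := by
  have hIoi : IntegrableOn (fun x => f |x|) (Ioi 0) :=
    hf.congr_fun (fun x hx => by rw [abs_of_pos hx]) measurableSet_Ioi
  have hIic : IntegrableOn (fun x => f |x|) (Iic 0) := by
    have hneg : MeasurableEmbedding (fun x : ℝ => -x) := (Homeomorph.neg ℝ).measurableEmbedding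
    rw [← Measure.map_neg_eq_self (volume : Measure ℝ), hneg.integrableOn_map_iff]
    simpa [Function.comp_def] using (integrableOn_Ici_iff_integrableOn_Ioi).mpr hIoi
  simpa using hIic.union hIoi

lemma integral_comp_abs_mul_cexp_I_mul {f : ℝ → ℝ} (hf : IntegrableOn f (Ioi 0)) (x : ℝ) :
    ∫ ξ : ℝ, (f |ξ| : ℂ) * cexp (Complex.I * x * ξ)
      = ((2 * ∫ t in Ioi 0, f t * cos (|x| * t) : ℝ) : ℂ) := by
  set h : ℝ → ℂ := fun ξ => (f |ξ| : ℂ) * cexp (Complex.I * x * ξ)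
  have hint : Integrable h := by
    refine hf.integrable_comp_abs.ofReal.mul_bdd (c := 1)
      (by fun_prop : Continuous _).aestronglyMeasurable (ae_of_all _ fun ξ => ?_)
    rw [show Complex.I * x * ξ = ((x * ξ : ℝ) : ℂ) * Complex.I by push_cast; ring,
      Complex.norm_exp_ofReal_mul_I]
  -- symmetrising cancels the odd part `f |ξ| sin (x ξ)`
  have hsym : ∀ ξ, h ξ + h (-ξ) = ((2 * (f |ξ| * cos (|x| * |ξ|)) : ℝ) : ℂ) := by
    intro ξ
    rw [← abs_mul, cos_abs]
    simp only [h, abs_neg]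
    push_cast
    rw [mul_left_comm, Complex.two_cos]
    ring_nf
  calc ∫ ξ, h ξ = (1 / 2 : ℂ) * ∫ ξ, (h ξ + h (-ξ)) := by
        rw [integral_add hint hint.comp_neg, integral_neg_eq_self]; ring
    _ = ((2 * ∫ t in Ioi 0, f t * cos (|x| * t) : ℝ) : ℂ) := by
        rw [integral_congr_ae (ae_of_all _ hsym), integral_complex_ofReal, integral_const_mul,
          integral_comp_abs (f := fun t => f t * cos (|x| * t))]
        push_cast; ring

lemma mul_integral_exp_neg_rpow_mul_cos {p : ℝ} (hp : 0 < p) (c : ℝ) :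
    c * ∫ t in Ioi 0, rexp (-t ^ p) * cos (c * t)
      = ∫ t in Ioi 0, p * t ^ (p - 1) * rexp (-t ^ p) * sin (c * t) := by
  have hu : ∀ t ∈ Ioi (0 : ℝ),
      HasDerivAt (fun t => rexp (-t ^ p)) (rexp (-t ^ p) * -(p * t ^ (p - 1))) t :=
    fun t ht => (hasDerivAt_rpow_const (Or.inl (ne_of_gt ht))).neg.exp
  have hv : ∀ t ∈ Ioi (0 : ℝ), HasDerivAt (fun t => sin (c * t)) (cos (c * t) * c) t :=
    fun t _ => by simpa using ((hasDerivAt_id t).const_mul c).sin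
  have huv' : IntegrableOn (fun t => rexp (-t ^ p) * (cos (c * t) * c)) (Ioi 0) :=
    (integrableOn_exp_neg_rpow hp).mul_bdd (c := |c|)
      (by fun_prop : Continuous _).aestronglyMeasurable (ae_of_all _ fun t => by
        simpa [abs_mul] using mul_le_of_le_one_left (abs_nonneg c) (abs_cos_le_one (c * t)))
  have hu'v : IntegrableOn (fun t => rexp (-t ^ p) * -(p * t ^ (p - 1)) * sin (c * t)) (Ioi 0) := by
    have : IntegrableOn (fun t => t ^ (p - 1) * rexp (-t ^ p) * (-p * sin (c * t))) (Ioi 0) :=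
      (integrableOn_rpow_mul_exp_neg_rpow (s := p - 1) (by linarith) hp).mul_bdd (c := p)
      (by fun_prop : Continuous fun t => -p * sin (c * t)).aestronglyMeasurable
      (ae_of_all _ fun t => by
        simpa [abs_mul, abs_of_pos hp] using mul_le_of_le_one_right hp.le (abs_sin_le_one (c * t)))
    exact this.congr_fun (fun t _ => by ring) measurableSet_Ioi
  have h_zero : Tendsto (fun t => rexp (-t ^ p) * sin (c * t)) (𝓝[>] 0) (𝓝 0) := by
    have : Continuous fun t => rexp (-t ^ p) * sin (c * t) := by
      fun_prop (disch := exact hp.le)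
    simpa using (this.tendsto 0).mono_left nhdsWithin_le_nhds
  have h_infty : Tendsto (fun t => rexp (-t ^ p) * sin (c * t)) atTop (𝓝 0) := by
    have hexp : Tendsto (fun t : ℝ => rexp (-t ^ p)) atTop (𝓝 0) :=
      tendsto_exp_atBot.comp (tendsto_neg_atTop_atBot.comp (tendsto_rpow_atTop hp))
    refine squeeze_zero_norm (fun t => ?_) hexp
    simpa [abs_mul] using mul_le_of_le_one_right (exp_pos _).le (abs_sin_le_one (c * t))
  have ibp := integral_Ioi_mul_deriv_eq_deriv_mul hu hv huv' hu'v h_zero h_infty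
  rw [← integral_const_mul]
  calc ∫ t in Ioi 0, c * (rexp (-t ^ p) * cos (c * t))
      = ∫ t in Ioi 0, rexp (-t ^ p) * (cos (c * t) * c) := by congr 1; ext t; ring
    _ = ∫ t in Ioi 0, p * t ^ (p - 1) * rexp (-t ^ p) * sin (c * t) := by
      rw [ibp, sub_zero, zero_sub, ← integral_neg]; congr 1; ext t; ring

lemma integral_rpow_mul_exp_neg_rpow_mul_sin {p c : ℝ} (hp : 0 < p) (hc : 0 < c) :
    ∫ t in Ioi 0, p * t ^ (p - 1) * rexp (-t ^ p) * sin (c * t)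
      = c ^ (-p) * ∫ u in Ioi 0, rexp (-(u * c ^ (-p))) * sin (u ^ (1 / p)) := by
  set g : ℝ → ℝ := fun u => rexp (-u) * sin (c * u ^ (1 / p))
  have hcp : 0 < c ^ (-p) := rpow_pos_of_pos hc _
  calc ∫ t in Ioi 0, p * t ^ (p - 1) * rexp (-t ^ p) * sin (c * t)
      = ∫ t in Ioi 0, (p * t ^ (p - 1)) • g (t ^ p) := by
        refine setIntegral_congr_fun measurableSet_Ioi fun t ht => ?_
        simp only [g]
        rw [smul_eq_mul, ← rpow_mul (le_of_lt ht), mul_one_div_cancel hp.ne', rpow_one, mul_assoc]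
    _ = ∫ u in Ioi 0, g u := integral_comp_rpow_Ioi_of_pos hp
    _ = c ^ (-p) * ∫ w in Ioi 0, g (c ^ (-p) * w) := by
        rw [← smul_eq_mul, integral_comp_mul_left_Ioi' g 0 hcp, mul_zero]
    _ = c ^ (-p) * ∫ u in Ioi 0, rexp (-(u * c ^ (-p))) * sin (u ^ (1 / p)) := by
        congr 1
        refine setIntegral_congr_fun measurableSet_Ioi fun w hw => ?_
        have : c * (c ^ (-p) * w) ^ (1 / p) = w ^ (1 / p) := by
          rw [mul_rpow hcp.le (le_of_lt hw), ← rpow_mul hc.le, neg_mul, mul_one_div_cancel hp.ne',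
            rpow_neg_one, mul_inv_cancel_left₀ hc.ne']
        simp only [g, this, mul_comm w]

theorem stmt_5 (α : ℝ) (hα : α ∈ Set.Ioc (0:ℝ) 1) (x : ℝ) (hx : x ≠ 0) :
    fracHeatProfile α x
      = (((1 / (Real.pi * |x| ^ (1 + 2 * α))) *
          ∫ u in Set.Ioi (0:ℝ),
            Real.exp (-(u * |x| ^ (-(2 * α)))) * Real.sin (u ^ (1 / (2 * α))) : ℝ) : ℂ) := by
  have hp : 0 < 2 * α := by linarith [hα.1]
  have hc : 0 < |x| := abs_pos.mpr hx
  have hcos := (mul_integral_exp_neg_rpow_mul_cos hp |x|).trans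
    (integral_rpow_mul_exp_neg_rpow_mul_sin hp hc)
  have hfourier := integral_comp_abs_mul_cexp_I_mul (integrableOn_exp_neg_rpow hp) x
  simp only [Complex.ofReal_exp, Complex.ofReal_neg] at hfourier
  rw [fracHeatProfile, hfourier,
    show (1 / (2 * π) : ℂ) = ((1 / (2 * π) : ℝ) : ℂ) by push_cast; rfl,
    ← Complex.ofReal_mul, Complex.ofReal_inj]
  set J := ∫ u in Ioi 0, rexp (-(u * |x| ^ (-(2 * α)))) * sin (u ^ (1 / (2 * α)))
  have hxp : 0 < |x| ^ (2 * α) := rpow_pos_of_pos hc _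
  rw [rpow_neg hc.le, ← div_eq_inv_mul, eq_div_iff hxp.ne'] at hcos
  rw [rpow_add hc, rpow_one]
  field_simp
  linear_combination hcos
end

section
/- For every α ∈ (1/2, 1], ∫_0^∞ i e^{-r^{1/(2α)} sin(π/(4α))} e^{i r^{1/(2α)} cos(π/(4α))} dr = Γ(2α + 1) e^{iαπ}. -/
/-!
Substituting `r = x ^ (2α)` turns the integral into `2α i ∫₀^∞ x ^ (2α - 1) e^(-z x) dx` with
`z = e^(i (π/(4α) - π/2))`, which lies in the open right half-plane because `α > 1/2`.
For `Re z > 0`, `∫₀^∞ t ^ (a - 1) e^(-z t) dt = Γ(a) / z ^ a`: both sides are holomorphic in `z`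
and agree for real `z > 0`, so the identity theorem does the work of rotating the contour.
Finally `z ^ (2α) = e^(i (π/2 - απ))`, and `2α Γ(2α) = Γ(2α + 1)`.
-/

open MeasureTheory Real Set Filter Topology

lemma integrableOn_rpow_mul_exp_neg_mul {s b : ℝ} (hs : -1 < s) (hb : 0 < b) :
    IntegrableOn (fun t : ℝ => t ^ s * rexp (-b * t)) (Ioi 0) := by
  simpa using integrableOn_rpow_mul_exp_neg_mul_rpow hs one_pos hb

namespace Complex

lemma cexp_cpow {x : ℂ} (h₁ : -π < x.im) (h₂ : x.im ≤ π) (p : ℂ) :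
    cexp x ^ p = cexp (x * p) := by
  rw [cpow_def_of_ne_zero (exp_ne_zero x), log_exp h₁ h₂]

lemma norm_ofReal_cpow_sub_one_mul_cexp_neg_mul {t : ℝ} (ht : 0 < t) (a z : ℂ) :
    ‖(t : ℂ) ^ (a - 1) * cexp (-z * t)‖ = t ^ (a.re - 1) * rexp (-z.re * t) := by
  rw [norm_mul, norm_exp, norm_cpow_eq_rpow_re_of_pos ht]
  simp [mul_re]

lemma continuousOn_ofReal_cpow_sub_one_mul_cexp_neg_mul (a z : ℂ) :
    ContinuousOn (fun t : ℝ => (t : ℂ) ^ (a - 1) * cexp (-z * t)) (Ioi 0) := by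
  refine ContinuousOn.mul (fun t ht => ?_) (by fun_prop)
  exact ((continuousAt_cpow_const (ofReal_mem_slitPlane.2 ht)).comp
    continuous_ofReal.continuousAt).continuousWithinAt

variable {a : ℂ}

lemma integrableOn_ofReal_cpow_sub_one_mul_cexp_neg_mul {z : ℂ} (ha : 0 < a.re) (hz : 0 < z.re) :
    IntegrableOn (fun t : ℝ => (t : ℂ) ^ (a - 1) * cexp (-z * t)) (Ioi 0) := by
  refine Integrable.mono' (g := fun t => t ^ (a.re - 1) * rexp (-z.re * t)) ?_
    ((continuousOn_ofReal_cpow_sub_one_mul_cexp_neg_mul a z).aestronglyMeasurable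
      measurableSet_Ioi) ?_
  · exact integrableOn_rpow_mul_exp_neg_mul (by linarith) hz
  · filter_upwards [ae_restrict_mem measurableSet_Ioi] with t ht
    exact (norm_ofReal_cpow_sub_one_mul_cexp_neg_mul ht a z).le

lemma differentiableOn_integral_ofReal_cpow_sub_one_mul_cexp_neg_mul (ha : 0 < a.re) :
    DifferentiableOn ℂ (fun z => ∫ t in Ioi (0 : ℝ), (t : ℂ) ^ (a - 1) * cexp (-z * t))
      {z | 0 < z.re} := by
  intro w hw
  have hε : 0 < w.re / 2 := half_pos hw
  have h_re : ∀ x ∈ Metric.ball w (w.re / 2), w.re / 2 ≤ x.re := fun x hx => by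
    have := (abs_re_le_norm (x - w)).trans (mem_ball_iff_norm.1 hx).le
    rw [sub_re] at this
    linarith [neg_abs_le (x.re - w.re)]
  refine (hasDerivAt_integral_of_dominated_loc_of_deriv_le (Metric.ball_mem_nhds w hε)
    (F' := fun x (t : ℝ) => (t : ℂ) ^ (a - 1) * (cexp (-x * t) * -t))
    (bound := fun t => t ^ a.re * rexp (-(w.re / 2) * t))
    (Eventually.of_forall fun x =>
      (continuousOn_ofReal_cpow_sub_one_mul_cexp_neg_mul a x).aestronglyMeasurable
        measurableSet_Ioi)
    (integrableOn_ofReal_cpow_sub_one_mul_cexp_neg_mul ha hw) ?_ ?_ ?_ ?_).2.differentiableAt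
    |>.differentiableWithinAt
  · refine ContinuousOn.aestronglyMeasurable ?_ measurableSet_Ioi
    simp_rw [← mul_assoc]
    exact (continuousOn_ofReal_cpow_sub_one_mul_cexp_neg_mul a w).mul (by fun_prop)
  · filter_upwards [ae_restrict_mem measurableSet_Ioi] with t (ht : 0 < t) x hx
    calc ‖(t : ℂ) ^ (a - 1) * (cexp (-x * t) * -t)‖
        = t ^ (a.re - 1) * rexp (-x.re * t) * t := by
          rw [← mul_assoc, norm_mul, norm_ofReal_cpow_sub_one_mul_cexp_neg_mul ht, norm_neg,
            norm_real, norm_of_nonneg ht.le]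
      _ = t ^ a.re * rexp (-x.re * t) := by
          rw [mul_right_comm, ← rpow_add_one ht.ne', sub_add_cancel]
      _ ≤ t ^ a.re * rexp (-(w.re / 2) * t) := by
          gcongr
          nlinarith [h_re x hx]
  · exact integrableOn_rpow_mul_exp_neg_mul (by linarith) hε
  · refine Eventually.of_forall fun t x _ => ?_
    exact ((((hasDerivAt_id x).neg.mul_const (t : ℂ)).cexp).const_mul _).congr_deriv (by simp)

theorem integral_ofReal_cpow_sub_one_mul_cexp_neg_mul {z : ℂ} (ha : 0 < a.re) (hz : 0 < z.re) :
    ∫ t in Ioi (0 : ℝ), (t : ℂ) ^ (a - 1) * cexp (-z * t) = Gamma a / z ^ a := by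
  have hU : IsOpen {w : ℂ | 0 < w.re} := isOpen_lt continuous_const continuous_re
  have hf := (differentiableOn_integral_ofReal_cpow_sub_one_mul_cexp_neg_mul ha).analyticOnNhd hU
  have hg : AnalyticOnNhd ℂ (fun w => Gamma a / w ^ a) {w | 0 < w.re} := by
    refine DifferentiableOn.analyticOnNhd (fun w (hw : 0 < w.re) => ?_) hU
    have hw' : w ∈ slitPlane := Or.inl hw
    refine ((differentiableAt_const _).div (differentiableAt_id.cpow_const hw') ?_)
      |>.differentiableWithinAt
    rw [id, cpow_def_of_ne_zero (slitPlane_ne_zero hw')]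
    exact exp_ne_zero _
  have h_real : ∀ r : ℝ, 0 < r →
      ∫ t in Ioi (0 : ℝ), (t : ℂ) ^ (a - 1) * cexp (-r * t) = Gamma a / (r : ℂ) ^ a := by
    intro r hr
    simp_rw [neg_mul]
    rw [integral_cpow_mul_exp_neg_mul_Ioi ha hr, one_div,
      inv_cpow _ _ (by simpa [arg_ofReal_of_nonneg hr.le] using pi_ne_zero.symm), mul_comm,
      div_eq_mul_inv]
  have h_ofReal : Tendsto ((↑) : ℝ → ℂ) (𝓝[≠] 1) (𝓝[≠] 1) :=
    tendsto_nhdsWithin_of_tendsto_nhds_of_eventually_within _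
      (by simpa using (continuous_ofReal.tendsto (1 : ℝ)).mono_left nhdsWithin_le_nhds)
      (eventually_nhdsWithin_of_forall fun r hr => by simpa using hr)
  have h_freq : ∃ᶠ w in 𝓝[≠] (1 : ℂ),
      ∫ t in Ioi (0 : ℝ), (t : ℂ) ^ (a - 1) * cexp (-w * t) = Gamma a / w ^ a :=
    h_ofReal.frequently <| Eventually.frequently <|
      ((lt_mem_nhds one_pos).filter_mono nhdsWithin_le_nhds).mono h_real
  exact hf.eqOn_of_preconnected_of_frequently_eq hg (convex_halfSpace_re_gt 0).isPreconnected
    (by simp) h_freq hz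

theorem integral_cexp_neg_mul_rpow_inv {p : ℝ} (hp : 0 < p) {z : ℂ} (hz : 0 < z.re) :
    ∫ r in Ioi (0 : ℝ), cexp (-z * ((r ^ p⁻¹ : ℝ) : ℂ)) = Gamma (p + 1) / z ^ (p : ℂ) := by
  rw [← integral_comp_rpow_Ioi _ hp.ne']
  calc ∫ x in Ioi (0 : ℝ), (|p| * x ^ (p - 1)) • cexp (-z * (((x ^ p) ^ p⁻¹ : ℝ) : ℂ))
      = ∫ x in Ioi (0 : ℝ), (p : ℂ) * ((x : ℂ) ^ ((p : ℂ) - 1) * cexp (-z * x)) := by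
        refine setIntegral_congr_fun measurableSet_Ioi fun x (hx : 0 < x) => ?_
        rw [rpow_rpow_inv hx.le hp.ne', abs_of_pos hp, real_smul, ofReal_mul,
          ofReal_cpow hx.le]
        push_cast
        ring
    _ = Gamma (p + 1) / z ^ (p : ℂ) := by
        rw [integral_const_mul, integral_ofReal_cpow_sub_one_mul_cexp_neg_mul (by simpa) hz,
          Gamma_add_one _ (by exact_mod_cast hp.ne'), mul_div_assoc]

end Complex

open Complex in
theorem stmt_6 (α : ℝ) (hα : α ∈ Set.Ioc (1/2 : ℝ) 1) :
    ∫ r in Set.Ioi (0:ℝ),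
        Complex.I * Complex.exp (-((r ^ (1 / (2 * α)) * Real.sin (Real.pi / (4 * α)) : ℝ) : ℂ)) *
          Complex.exp (Complex.I * ((r ^ (1 / (2 * α)) * Real.cos (Real.pi / (4 * α)) : ℝ) : ℂ))
      = (Real.Gamma (2 * α + 1) : ℂ) * Complex.exp (Complex.I * ((α * Real.pi : ℝ) : ℂ)) := by
  obtain ⟨hα₁, -⟩ := hα
  have hα₀ : 0 < 2 * α := by linarith
  set φ : ℝ := π / (4 * α) - π / 2 with hφ
  have hφ_mem : φ ∈ Ioo (-(π / 2)) 0 := by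
    constructor
    · have : 0 < π / (4 * α) := by positivity
      linarith
    · rw [sub_neg, div_lt_div_iff₀ (by linarith) two_pos]
      nlinarith [pi_pos]
  set z : ℂ := cexp (φ * I) with hz_def
  have hz : 0 < z.re := by
    rw [exp_ofReal_mul_I_re]
    exact cos_pos_of_mem_Ioo ⟨hφ_mem.1, hφ_mem.2.trans (by positivity)⟩
  have h_integrand : ∀ r : ℝ,
      I * cexp (-((r ^ (1 / (2 * α)) * Real.sin (π / (4 * α)) : ℝ) : ℂ)) *
        cexp (I * ((r ^ (1 / (2 * α)) * Real.cos (π / (4 * α)) : ℝ) : ℂ))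
      = I * cexp (-z * ((r ^ (2 * α)⁻¹ : ℝ) : ℂ)) := by
    intro r
    rw [mul_assoc, ← Complex.exp_add, hz_def, exp_mul_I, ← ofReal_cos, ← ofReal_sin, hφ,
      Real.cos_sub_pi_div_two, Real.sin_sub_pi_div_two, one_div]
    push_cast
    congr 2
    ring
  have h_im : ((φ : ℂ) * I).im = φ := by simp
  have hz_pow : z ^ ((2 * α : ℝ) : ℂ) = cexp (π / 2 * I - I * ((α * π : ℝ) : ℂ)) := by
    have h_angle : φ * (2 * α) = π / 2 - α * π := by
      rw [hφ]
      field_simp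
      ring
    rw [cexp_cpow (by rw [h_im]; linarith [hφ_mem.1, pi_pos])
      (by rw [h_im]; linarith [hφ_mem.2, pi_pos]),
      mul_right_comm, ← ofReal_mul, h_angle]
    push_cast
    congr 1
    ring
  simp_rw [h_integrand]
  rw [integral_const_mul, integral_cexp_neg_mul_rpow_inv hα₀ hz, hz_pow, Complex.exp_sub,
    exp_pi_div_two_mul_I, ← ofReal_one, ← ofReal_add, Gamma_ofReal]
  field_simp
end

section
/- There exists a constant C > 0, independent of α ∈ (1/2, 1), such that for all sufficiently large y > 0: ∫_{|z| > y} e^{-|z|^{2α}} |z|^{d(α−1)} dz ≤ C e^{-y^{2α}} / (2α y^{α(2−d)}), where the integral is over ℝ^d. -/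
/-!
In polar coordinates the integral is `d |B₁| ∫_y^∞ r^(dα-1) e^(-r^(2α)) dr`.
Split `e^(-r^(2α))` into two halves. The factor `r^(α(d-2)) e^(-r^(2α)/2)` is
decreasing on `[y, ∞)` as soon as `y^(2α) ≥ d - 2`, which holds for `y ≥ d` because
`2α ≥ 1`; so it is at most its value at `y`. The remaining factor
`r^(2α-1) e^(-r^(2α)/2)` is an exact derivative and integrates to `e^(-y^(2α)/2) / α`.
No constant depends on `α`.
-/

open MeasureTheory Real Set

theorem rpow_mul_exp_neg_mul_le {b c Y T : ℝ} (hc : 0 ≤ c) (hY : 0 < Y) (hYT : Y ≤ T)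
    (hb : b ≤ c * Y) : T ^ b * exp (-(c * T)) ≤ Y ^ b * exp (-(c * Y)) := by
  have hT : 0 < T := hY.trans_le hYT
  rw [rpow_def_of_pos hY, rpow_def_of_pos hT, ← exp_add, ← exp_add, exp_le_exp]
  have hlog : log T - log Y ≤ T / Y - 1 := by
    rw [← log_div hT.ne' hY.ne']
    exact log_le_sub_one_of_pos (div_pos hT hY)
  have hlog0 : 0 ≤ log T - log Y := sub_nonneg.2 (log_le_log hY hYT)
  have hTY : (T / Y - 1) * Y = T - Y := by field_simp
  rcases le_or_gt b 0 with hb0 | hb0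
  · nlinarith
  · nlinarith [mul_le_mul_of_nonneg_left hlog hb0.le,
      mul_le_mul_of_nonneg_right hb (hlog0.trans hlog)]

section TailIntegral

variable {c p y : ℝ}

theorem hasDerivAt_neg_exp_neg_mul_rpow_div {r : ℝ} (hcp : c * p ≠ 0) (hr : 0 < r) :
    HasDerivAt (fun t : ℝ => -exp (-(c * t ^ p)) / (c * p))
      (r ^ (p - 1) * exp (-(c * r ^ p))) r := by
  have h := (((hasDerivAt_rpow_const (p := p) (Or.inl hr.ne')).const_mul c).fun_neg.exp).fun_neg
  refine (h.div_const (c * p)).congr_deriv ?_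
  rw [div_eq_iff hcp]
  ring

theorem tendsto_neg_exp_neg_mul_rpow_div_atTop (hc : 0 < c) (hp : 0 < p) :
    Filter.Tendsto (fun t : ℝ => -exp (-(c * t ^ p)) / (c * p)) Filter.atTop (nhds 0) := by
  have h := tendsto_exp_atBot.comp
    (Filter.tendsto_neg_atTop_atBot.comp ((tendsto_rpow_atTop hp).const_mul_atTop hc))
  simpa using h.neg.div_const (c * p)

theorem integrableOn_Ioi_rpow_sub_one_mul_exp_neg_mul_rpow (hc : 0 < c) (hp : 0 < p)
    (hy : 0 < y) : IntegrableOn (fun r : ℝ => r ^ (p - 1) * exp (-(c * r ^ p))) (Ioi y) :=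
  integrableOn_Ioi_deriv_of_nonneg'
    (fun _ hr => hasDerivAt_neg_exp_neg_mul_rpow_div (mul_pos hc hp).ne' (hy.trans_le hr))
    (fun _ hr => mul_nonneg (rpow_nonneg (hy.trans hr).le _) (exp_nonneg _))
    (tendsto_neg_exp_neg_mul_rpow_div_atTop hc hp)

theorem integral_Ioi_rpow_sub_one_mul_exp_neg_mul_rpow (hc : 0 < c) (hp : 0 < p) (hy : 0 < y) :
    ∫ r in Ioi y, r ^ (p - 1) * exp (-(c * r ^ p)) = exp (-(c * y ^ p)) / (c * p) := by
  rw [integral_Ioi_of_hasDerivAt_of_nonneg'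
    (fun _ hr => hasDerivAt_neg_exp_neg_mul_rpow_div (mul_pos hc hp).ne' (hy.trans_le hr))
    (fun _ hr => mul_nonneg (rpow_nonneg (hy.trans hr).le _) (exp_nonneg _))
    (tendsto_neg_exp_neg_mul_rpow_div_atTop hc hp)]
  ring

end TailIntegral

theorem integral_Ioi_rpow_mul_exp_neg_rpow_le {p s y : ℝ} (hp : 0 < p) (hy : 0 < y)
    (hsy : s / p - 1 ≤ y ^ p / 2) :
    ∫ r in Ioi y, r ^ (s - 1) * exp (-r ^ p) ≤ 2 * y ^ (s - p) * exp (-y ^ p) / p := by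
  set K := (y ^ p) ^ (s / p - 1) * exp (-(1 / 2 * y ^ p)) with hK
  have hsplit : ∀ r > 0, r ^ (s - 1) * exp (-r ^ p) =
      (r ^ p) ^ (s / p - 1) * exp (-(1 / 2 * r ^ p)) * (r ^ (p - 1) * exp (-(1 / 2 * r ^ p))) := by
    intro r hr
    rw [← rpow_mul hr.le, mul_mul_mul_comm, ← rpow_add hr, ← exp_add]
    congr 2 <;> field_simp <;> ring
  have hbound : ∀ r ∈ Ioi y,
      r ^ (s - 1) * exp (-r ^ p) ≤ K * (r ^ (p - 1) * exp (-(1 / 2 * r ^ p))) := by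
    intro r hr
    have hr0 : 0 < r := hy.trans hr
    rw [hsplit r hr0]
    exact mul_le_mul_of_nonneg_right
      (rpow_mul_exp_neg_mul_le (by norm_num) (rpow_pos_of_pos hy p)
        (rpow_le_rpow hy.le (le_of_lt hr) hp.le) (by linarith))
      (mul_nonneg (rpow_nonneg hr0.le _) (exp_nonneg _))
  calc ∫ r in Ioi y, r ^ (s - 1) * exp (-r ^ p)
      ≤ ∫ r in Ioi y, K * (r ^ (p - 1) * exp (-(1 / 2 * r ^ p))) :=
        setIntegral_mono_of_nonneg
          (fun r hr => mul_nonneg (rpow_nonneg (hy.trans hr).le _) (exp_nonneg _)) hbound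
          ((integrableOn_Ioi_rpow_sub_one_mul_exp_neg_mul_rpow (by norm_num) hp hy).const_mul K)
    _ = 2 * y ^ (s - p) * exp (-y ^ p) / p := by
        have hexp : exp (-y ^ p) = exp (-(1 / 2 * y ^ p)) * exp (-(1 / 2 * y ^ p)) := by
          rw [← exp_add]; ring_nf
        have hpow : p * (s / p - 1) = s - p := by field_simp
        rw [integral_const_mul, integral_Ioi_rpow_sub_one_mul_exp_neg_mul_rpow (by norm_num) hp hy,
          hK, ← rpow_mul hy.le, hpow, hexp]
        field_simp

section PolarCoordinates

variable {E : Type*} [NormedAddCommGroup E] [NormedSpace ℝ E] [Nontrivial E]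
  [FiniteDimensional ℝ E] [MeasurableSpace E] [BorelSpace E]
  (μ : Measure E) [μ.IsAddHaarMeasure]

local notation "dim" => Module.finrank ℝ E

theorem integral_norm_gt_eq_integral_Ioi {F : Type*} [NormedAddCommGroup F] [NormedSpace ℝ F]
    (f : ℝ → F) {y : ℝ} (hy : 0 ≤ y) :
    ∫ x in {x : E | y < ‖x‖}, f ‖x‖ ∂μ =
      dim • μ.real (Metric.ball 0 1) • ∫ r in Ioi y, r ^ (dim - 1) • f r := by
  have hind : {x : E | y < ‖x‖}.indicator (fun x => f ‖x‖) =
      fun x => (Ioi y).indicator f ‖x‖ := by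
    ext x
    simp [indicator]
  rw [← integral_indicator (measurableSet_lt measurable_const measurable_norm), hind,
    integral_fun_norm_addHaar μ]
  simp_rw [fun r : ℝ => (indicator_smul_apply (Ioi y) (fun r => r ^ (dim - 1)) f r).symm]
  rw [setIntegral_indicator measurableSet_Ioi, Ioi_inter_Ioi, max_eq_right hy]

theorem integral_norm_gt_exp_neg_rpow_mul_rpow_le {p s y : ℝ} (hp : 0 < p) (hy : 0 < y)
    (hsy : s / p - 1 ≤ y ^ p / 2) :
    ∫ x in {x : E | y < ‖x‖}, exp (-‖x‖ ^ p) * ‖x‖ ^ (s - dim) ∂μ ≤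
      dim * (μ.real (Metric.ball 0 1) * (2 * y ^ (s - p) * exp (-y ^ p) / p)) := by
  have hdim : 1 ≤ dim := Module.finrank_pos
  have hradial : ∀ r ∈ Ioi y,
      r ^ (dim - 1) • (exp (-r ^ p) * r ^ (s - dim)) = r ^ (s - 1) * exp (-r ^ p) := by
    intro r hr
    rw [smul_eq_mul, ← rpow_natCast, Nat.cast_sub hdim, Nat.cast_one, mul_left_comm,
      ← rpow_add (hy.trans hr), mul_comm]
    ring_nf
  rw [integral_norm_gt_eq_integral_Ioi μ (fun r => exp (-r ^ p) * r ^ (s - dim)) hy.le,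
    setIntegral_congr_fun measurableSet_Ioi hradial, nsmul_eq_mul, smul_eq_mul]
  gcongr
  exact integral_Ioi_rpow_mul_exp_neg_rpow_le hp hy hsy

end PolarCoordinates

theorem stmt_9 (d : ℕ) (hd : 1 ≤ d) :
    ∃ C > (0:ℝ), ∃ y₀ > (0:ℝ), ∀ α ∈ Set.Ioo (1/2 : ℝ) 1, ∀ y ≥ y₀,
      (∫ z in {z : EuclideanSpace ℝ (Fin d) | y < ‖z‖},
          Real.exp (-(‖z‖ ^ (2 * α))) * ‖z‖ ^ ((d : ℝ) * (α - 1)))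
        ≤ C * Real.exp (-(y ^ (2 * α))) / (2 * α * y ^ (α * (2 - (d : ℝ)))) := by
  have : Nontrivial (EuclideanSpace ℝ (Fin d)) :=
    Module.nontrivial_of_finrank_pos (R := ℝ) (by rw [finrank_euclideanSpace_fin]; omega)
  have hV : 0 < volume.real (Metric.ball (0 : EuclideanSpace ℝ (Fin d)) 1) :=
    ENNReal.toReal_pos (Metric.measure_ball_pos _ _ one_pos).ne' measure_ball_lt_top.ne
  have hd1 : (1 : ℝ) ≤ d := by exact_mod_cast hd
  refine ⟨2 * d * volume.real (Metric.ball (0 : EuclideanSpace ℝ (Fin d)) 1), by positivity,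
    d, by positivity, fun α ⟨hα, _⟩ y hy => ?_⟩
  have hy0 : 0 < y := by linarith
  have hsy : d * α / (2 * α) - 1 ≤ y ^ (2 * α) / 2 := by
    have : y ≤ y ^ (2 * α) := by
      simpa using rpow_le_rpow_of_exponent_le (by linarith : 1 ≤ y) (by linarith : 1 ≤ 2 * α)
    rw [mul_div_mul_right _ _ (by linarith : α ≠ 0)]
    linarith
  have h := integral_norm_gt_exp_neg_rpow_mul_rpow_le
    (volume : Measure (EuclideanSpace ℝ (Fin d))) (by linarith) hy0 hsy
  rw [finrank_euclideanSpace_fin, show d * α - d = (d : ℝ) * (α - 1) by ring] at h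
  refine h.trans_eq ?_
  rw [show d * α - 2 * α = -(α * (2 - d)) by ring, rpow_neg hy0.le]
  field_simp
end

section
/- If u : ℝ^d → ℝ is nonnegative, integrable, radially symmetric and radially nonincreasing, and v : ℝ^d → ℝ is nonnegative, bounded, radially symmetric and radially nonincreasing, then the convolution u ⋆ v is nonnegative, radially symmetric and radially nonincreasing. -/
/-!
Fix `‖x'‖ ≤ ‖x‖` and let `σ` be the reflection in the perpendicular bisector of `x` and `x'`:
an isometry preserving Lebesgue measure and swapping `x` and `x'`. A point `y` on the side of
the bisector containing `x'` (and hence `0`) is closer to `x'` than to `x`, and no farther from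
`0` than `σ y`. So `u y - u (σ y)` and `v (x' - y) - v (x - y)` always have the same sign, and
pairing `y` with `σ y` gives `∫ u y * (v (x' - y) - v (x - y)) dy ≥ 0`: the convolution is
antitone in `‖x‖`, in particular radial.
-/

open MeasureTheory Real Set

/-- A function on `ℝ^d` is radially symmetric and radially nonincreasing if it is of the form
`x ↦ W ‖x‖` for some `W` nonincreasing on `[0, ∞)`. -/
def RadialNonincreasing {d : ℕ} (w : EuclideanSpace ℝ (Fin d) → ℝ) : Prop :=
  ∃ W : ℝ → ℝ, AntitoneOn W (Set.Ici 0) ∧ ∀ x, w x = W ‖x‖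

open scoped RealInnerProductSpace

section Reflection

variable {E : Type*} [NormedAddCommGroup E] [InnerProductSpace ℝ E]

lemma norm_sub_le_norm_sub_reflection {n a b : E} (h : 0 ≤ ⟪n, a⟫ * ⟪n, b⟫) :
    ‖a - b‖ ≤ ‖a - (ℝ ∙ n)ᗮ.reflection b‖ := by
  rcases eq_or_ne n 0 with rfl | hn
  · simp [Submodule.reflection_mem_subspace_eq_self Submodule.mem_top]
  have hρ : (ℝ ∙ n)ᗮ.reflection b = b - (2 * (⟪n, b⟫ / ‖n‖ ^ 2)) • n := by
    rw [Submodule.reflection_orthogonal_apply, Submodule.reflection_singleton_apply]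
    simp only [RCLike.ofReal_real_eq_id, id]
    module
  -- `‖a - ρ b‖ ^ 2 = ‖a - b‖ ^ 2 + 4 * ⟪n, a⟫ * ⟪n, b⟫ / ‖n‖ ^ 2`
  rw [hρ, ← sq_le_sq₀ (norm_nonneg _) (norm_nonneg _), sub_sub_eq_add_sub, add_sub_right_comm,
    norm_add_sq_real, norm_smul, real_inner_smul_right, inner_sub_left, mul_pow, Real.norm_eq_abs,
    sq_abs, real_inner_comm n a, real_inner_comm n b]
  field_simp
  nlinarith

lemma inner_reflection_orthogonalComplement_singleton (n b : E) :
    ⟪n, (ℝ ∙ n)ᗮ.reflection b⟫ = -⟪n, b⟫ := by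
  rw [← LinearIsometryEquiv.inner_map_map (ℝ ∙ n)ᗮ.reflection, Submodule.reflection_reflection,
    Submodule.reflection_orthogonalComplement_singleton_eq_neg, inner_neg_left]

noncomputable def bisectorReflection (x x' y : E) : E :=
  (ℝ ∙ (x - x'))ᗮ.reflection (y - midpoint ℝ x x') + midpoint ℝ x x'

variable (x x' : E)

lemma bisectorReflection_involutive : Function.Involutive (bisectorReflection x x') := by
  intro y
  simp [bisectorReflection]

lemma bisectorReflection_left : bisectorReflection x x' x = x' := by
  rw [bisectorReflection, left_sub_midpoint, map_smul,
    Submodule.reflection_orthogonalComplement_singleton_eq_neg, midpoint_eq_smul_add]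
  simp only [invOf_eq_inv]
  module

lemma bisectorReflection_right : bisectorReflection x x' x' = x :=
  (bisectorReflection_involutive x x').eq_iff.2 (bisectorReflection_left x x').symm

lemma norm_bisectorReflection_sub (a b : E) :
    ‖bisectorReflection x x' a - bisectorReflection x x' b‖ = ‖a - b‖ := by
  simp [bisectorReflection, ← map_sub]

lemma inner_bisectorReflection_sub_midpoint (y : E) :
    ⟪x - x', bisectorReflection x x' y - midpoint ℝ x x'⟫ = -⟪x - x', y - midpoint ℝ x x'⟫ := by
  rw [bisectorReflection, add_sub_cancel_right, inner_reflection_orthogonalComplement_singleton]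

lemma norm_sub_le_norm_sub_bisectorReflection {p q : E}
    (h : 0 ≤ ⟪x - x', p - midpoint ℝ x x'⟫ * ⟪x - x', q - midpoint ℝ x x'⟫) :
    ‖p - q‖ ≤ ‖p - bisectorReflection x x' q‖ := by
  convert norm_sub_le_norm_sub_reflection h using 2
  · abel
  · rw [bisectorReflection]; abel

variable {x x'}

lemma norm_le_norm_bisectorReflection (hx : ‖x'‖ ≤ ‖x‖) {y : E}
    (hy : ⟪x - x', y - midpoint ℝ x x'⟫ ≤ 0) : ‖y‖ ≤ ‖bisectorReflection x x' y‖ := by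
  have h0 : ⟪x - x', 0 - midpoint ℝ x x'⟫ ≤ 0 := by
    simp only [zero_sub, inner_neg_right, midpoint_eq_smul_add, invOf_eq_inv,
      real_inner_smul_right, inner_sub_left, inner_add_right, real_inner_self_eq_norm_sq,
      real_inner_comm x x']
    nlinarith [norm_nonneg x']
  simpa using norm_sub_le_norm_sub_bisectorReflection x x' (mul_nonneg_of_nonpos_of_nonpos h0 hy)

lemma norm_sub_le_norm_sub_of_inner_nonpos {y : E} (hy : ⟪x - x', y - midpoint ℝ x x'⟫ ≤ 0) :
    ‖x' - y‖ ≤ ‖x - y‖ := by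
  have hx' : ⟪x - x', x' - midpoint ℝ x x'⟫ ≤ 0 := by
    simp only [right_sub_midpoint, invOf_eq_inv, real_inner_smul_right, ← neg_sub x x',
      inner_neg_right, real_inner_self_eq_norm_sq]
    nlinarith [sq_nonneg ‖x - x'‖]
  calc ‖x' - y‖ ≤ ‖x' - bisectorReflection x x' y‖ :=
        norm_sub_le_norm_sub_bisectorReflection x x' (mul_nonneg_of_nonpos_of_nonpos hx' hy)
    _ = ‖x - y‖ := by rw [← norm_bisectorReflection_sub x x' x y, bisectorReflection_left]

lemma measurePreserving_bisectorReflection [FiniteDimensional ℝ E] [MeasurableSpace E]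
    [BorelSpace E] : MeasurePreserving (bisectorReflection x x') :=
  (measurePreserving_add_right volume _).comp
    (((ℝ ∙ (x - x'))ᗮ.reflection.measurePreserving).comp (measurePreserving_sub_right volume _))

end Reflection

lemma integral_nonneg_of_add_comp_nonneg {α : Type*} [MeasurableSpace α] {μ : Measure α}
    {σ : α → α} (hσ : MeasurePreserving σ μ μ) (hσi : Function.Involutive σ) {D : α → ℝ}
    (hD : Integrable D μ) (h : ∀ y, 0 ≤ D y + D (σ y)) : 0 ≤ ∫ y, D y ∂μ := by
  have hσe := (MeasurableEquiv.ofInvolutive σ hσi hσ.measurable).measurableEmbedding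
  have hDσ : Integrable (fun y => D (σ y)) μ := (hσ.integrable_comp_emb hσe).2 hD
  have hsum : 0 ≤ ∫ y, D y + D (σ y) ∂μ := integral_nonneg h
  rw [integral_add hD hDσ, hσ.integral_comp hσe D] at hsum
  linarith

lemma integral_mul_comp_sub_le_of_norm_le {E : Type*} [NormedAddCommGroup E]
    [InnerProductSpace ℝ E] [FiniteDimensional ℝ E] [MeasurableSpace E] [BorelSpace E]
    {u v : E → ℝ} {U V : ℝ → ℝ} (hU : AntitoneOn U (Ici 0)) (hu : ∀ y, u y = U ‖y‖)
    (hV : AntitoneOn V (Ici 0)) (hv : ∀ y, v y = V ‖y‖)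
    (hint : ∀ z, Integrable fun y => u y * v (z - y)) {x x' : E} (hx : ‖x'‖ ≤ ‖x‖) :
    ∫ y, u y * v (x - y) ≤ ∫ y, u y * v (x' - y) := by
  set σ := bisectorReflection x x'
  set f : E → ℝ := fun p => ⟪x - x', p - midpoint ℝ x x'⟫
  have hvσx' (y : E) : v (x' - σ y) = v (x - y) := by
    rw [hv, hv, ← norm_bisectorReflection_sub x x' x y, bisectorReflection_left]
  have hvσx (y : E) : v (x - σ y) = v (x' - y) := by
    rw [hv, hv, ← norm_bisectorReflection_sub x x' x' y, bisectorReflection_right]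
  have hσ_le (y : E) (hy : f y ≤ 0) : u (σ y) ≤ u y ∧ v (x - y) ≤ v (x' - y) := by
    rw [hu, hu, hv, hv]
    exact ⟨hU (norm_nonneg _) (norm_nonneg _) (norm_le_norm_bisectorReflection hx hy),
      hV (norm_nonneg _) (norm_nonneg _) (norm_sub_le_norm_sub_of_inner_nonpos hy)⟩
  have hpair (y : E) : 0 ≤ (u y - u (σ y)) * (v (x' - y) - v (x - y)) := by
    rcases le_total (f y) 0 with hy | hy
    · obtain ⟨h1, h2⟩ := hσ_le y hy
      exact mul_nonneg (sub_nonneg.2 h1) (sub_nonneg.2 h2)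
    · have hσy : f (σ y) = -f y := inner_bisectorReflection_sub_midpoint x x' y
      obtain ⟨h1, h2⟩ := hσ_le (σ y) (by linarith)
      rw [show σ (σ y) = y from bisectorReflection_involutive x x' y] at h1
      rw [hvσx, hvσx'] at h2
      exact mul_nonneg_of_nonpos_of_nonpos (sub_nonpos.2 h1) (sub_nonpos.2 h2)
  rw [← sub_nonneg, ← integral_sub (hint x') (hint x)]
  refine integral_nonneg_of_add_comp_nonneg measurePreserving_bisectorReflection
    (bisectorReflection_involutive x x') ((hint x').sub (hint x)) fun y => ?_
  rw [hvσx, hvσx']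
  linarith [hpair y]

namespace RadialNonincreasing

variable {d : ℕ} {w : EuclideanSpace ℝ (Fin d) → ℝ}

lemma measurable (hw : RadialNonincreasing w) : Measurable w := by
  obtain ⟨W, hW, hwW⟩ := hw
  have hanti : Antitone fun r => W (max r 0) := fun a b hab =>
    hW (le_max_right a 0) (le_max_right b 0) (max_le_max hab le_rfl)
  have hw_eq : w = (fun r => W (max r 0)) ∘ norm :=
    funext fun x => by simp [hwW, norm_nonneg]
  exact hw_eq ▸ hanti.measurable.comp measurable_norm

lemma apply_le_apply_zero (hw : RadialNonincreasing w) (x : EuclideanSpace ℝ (Fin d)) :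
    w x ≤ w 0 := by
  obtain ⟨W, hW, hwW⟩ := hw
  rw [hwW, hwW, norm_zero]
  exact hW (mem_Ici.2 le_rfl) (norm_nonneg x) (norm_nonneg x)

lemma integrable_mul_comp_sub (hw : RadialNonincreasing w) (hw0 : ∀ x, 0 ≤ w x)
    {u : EuclideanSpace ℝ (Fin d) → ℝ} (hu : Integrable u) (z : EuclideanSpace ℝ (Fin d)) :
    Integrable fun y => u y * w (z - y) :=
  hu.mul_bdd (hw.measurable.comp (measurable_const.sub measurable_id)).aestronglyMeasurable
    (ae_of_all _ fun y => by
      rw [Real.norm_eq_abs, abs_of_nonneg (hw0 _)]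
      exact hw.apply_le_apply_zero _)

end RadialNonincreasing

lemma radialNonincreasing_of_norm_le {d : ℕ} {F : EuclideanSpace ℝ (Fin d) → ℝ}
    (hF : ∀ x x', ‖x'‖ ≤ ‖x‖ → F x ≤ F x') : RadialNonincreasing F := by
  obtain ⟨e, he⟩ : ∃ e : EuclideanSpace ℝ (Fin d), ∀ x : EuclideanSpace ℝ (Fin d),
      ‖‖x‖ • e‖ = ‖x‖ := by
    rcases subsingleton_or_nontrivial (EuclideanSpace ℝ (Fin d)) with _ | _
    · exact ⟨0, fun x => by simp [Subsingleton.elim x 0]⟩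
    · obtain ⟨e, he⟩ := exists_norm_eq (EuclideanSpace ℝ (Fin d)) zero_le_one
      exact ⟨e, fun x => by rw [norm_smul, he, norm_norm, mul_one]⟩
  refine ⟨fun r => F (r • e), fun a ha b hb hab => hF _ _ ?_, fun x => ?_⟩
  · rw [norm_smul, norm_smul, Real.norm_of_nonneg ha, Real.norm_of_nonneg hb]
    exact mul_le_mul_of_nonneg_right hab (norm_nonneg e)
  · exact le_antisymm (hF _ _ (he x).le) (hF _ _ (he x).ge)

theorem stmt_10_general {d : ℕ} (u v : EuclideanSpace ℝ (Fin d) → ℝ)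
    (hu0 : ∀ x, 0 ≤ u x) (huI : Integrable u) (hur : RadialNonincreasing u)
    (hv0 : ∀ x, 0 ≤ v x) (hvr : RadialNonincreasing v) :
    (∀ x, 0 ≤ ∫ y, u y * v (x - y)) ∧
      RadialNonincreasing (fun x => ∫ y, u y * v (x - y)) := by
  have hint := hvr.integrable_mul_comp_sub hv0 huI
  obtain ⟨U, hU, hu⟩ := hur
  obtain ⟨V, hV, hv⟩ := hvr
  exact ⟨fun x => integral_nonneg fun y => mul_nonneg (hu0 y) (hv0 _),
    radialNonincreasing_of_norm_le fun _ _ => integral_mul_comp_sub_le_of_norm_le hU hu hV hv hint⟩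

theorem stmt_10 {d : ℕ} (u v : EuclideanSpace ℝ (Fin d) → ℝ)
    (hu0 : ∀ x, 0 ≤ u x) (huI : Integrable u) (hur : RadialNonincreasing u)
    (hv0 : ∀ x, 0 ≤ v x) (hvb : ∃ M, ∀ x, v x ≤ M) (hvr : RadialNonincreasing v) :
    (∀ x, 0 ≤ ∫ y, u y * v (x - y)) ∧
      RadialNonincreasing (fun x => ∫ y, u y * v (x - y)) :=
  stmt_10_general u v hu0 huI hur hv0 hvr
end

section
/- For every α ∈ (1/2, 1) and t ∈ [1, −ln(1−α)], one has |t − t^{1/α}| = O(√(1−α)) as α → 1; more precisely there is a constant C independent of α such that |t^{1/α} − t| ≤ C √(1−α) for all t ∈ [1, −ln(1−α)]. -/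
open MeasureTheory Real Set

lemma exp_sub_one_le (y : ℝ) (hy : 0 ≤ y) : Real.exp y - 1 ≤ y * Real.exp y := by
  have h1 : 1 - y ≤ Real.exp (-y) := by
    have := Real.add_one_le_exp (-y)
    linarith
  have h2 : Real.exp (-y) * Real.exp y = 1 := by
    rw [← Real.exp_add]; simp
  have h3 : 0 < Real.exp y := Real.exp_pos y
  nlinarith

set_option maxHeartbeats 1600000 in
theorem stmt_12 :
    ∃ C > (0:ℝ), ∀ α ∈ Set.Ioo (1/2 : ℝ) 1, ∀ t ∈ Set.Icc (1:ℝ) (-Real.log (1 - α)),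
      |t ^ (1 / α) - t| ≤ C * Real.sqrt (1 - α) := by
  refine ⟨432, by norm_num, ?_⟩
  rintro α ⟨hα1, hα2⟩ t ⟨ht1, ht2⟩
  set ε := 1 - α with hεdef
  have hε0 : 0 < ε := by rw [hεdef]; linarith
  have hε2 : ε < 1/2 := by rw [hεdef]; linarith
  have hα0 : 0 < α := by linarith
  have ht0 : 0 < t := by linarith
  have h1a : 1 ≤ 1/α := by rw [le_div_iff₀ hα0]; linarith
  have habs : |t ^ (1/α) - t| = t ^ (1/α) - t := by
    rw [abs_of_nonneg]
    have h := Real.rpow_le_rpow_of_exponent_le ht1 h1a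
    rw [Real.rpow_one] at h
    linarith
  set x := Real.log t with hxdef
  have hx0 : 0 ≤ x := Real.log_nonneg ht1
  set δ := 1/α - 1 with hδdef
  have hδ0 : 0 ≤ δ := sub_nonneg.mpr h1a
  have hδ2 : δ ≤ 2 * ε := by
    have h2 : 1/α ≤ 1 + 2*ε := by
      rw [div_le_iff₀ hα0]
      nlinarith [mul_nonneg (by linarith : (0:ℝ) ≤ 2*α - 1) (by linarith : (0:ℝ) ≤ 1 - α)]
    rw [hδdef, hεdef]; rw [hεdef] at h2; linarith
  have hδ1 : δ ≤ 1 := by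
    have h2 : 1/α ≤ 2 := by rw [div_le_iff₀ hα0]; linarith
    linarith
  have htx : t = Real.exp x := (Real.exp_log ht0).symm
  have hrpow : t ^ (1/α) = Real.exp (x + δ * x) := by
    rw [Real.rpow_def_of_pos ht0, ← hxdef]
    congr 1
    rw [hδdef]; ring
  -- main bound on the difference
  have key : t ^ (1/α) - t ≤ 2 * ε * (x * Real.exp (2 * x)) := by
    have hsplit : Real.exp (x + δ * x) - Real.exp x
        = Real.exp x * (Real.exp (δ * x) - 1) := by
      rw [Real.exp_add]; ring
    rw [hrpow, htx, hsplit]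
    have h1 : Real.exp (δ * x) - 1 ≤ (δ * x) * Real.exp (δ * x) :=
      exp_sub_one_le _ (mul_nonneg hδ0 hx0)
    have h2 : Real.exp x * (Real.exp (δ * x) - 1)
        ≤ Real.exp x * ((δ * x) * Real.exp (δ * x)) :=
      mul_le_mul_of_nonneg_left h1 (Real.exp_pos x).le
    have h3 : Real.exp x * ((δ * x) * Real.exp (δ * x))
        = δ * x * Real.exp (x + δ * x) := by
      rw [Real.exp_add]; ring
    have h4 : Real.exp (x + δ * x) ≤ Real.exp (2 * x) := by
      apply Real.exp_le_exp.2
      nlinarith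
    have h5 : δ * x * Real.exp (x + δ * x) ≤ 2 * ε * (x * Real.exp (2 * x)) := by
      have hp : 0 ≤ δ * x := mul_nonneg hδ0 hx0
      calc δ * x * Real.exp (x + δ * x) ≤ δ * x * Real.exp (2 * x) :=
            mul_le_mul_of_nonneg_left h4 hp
        _ ≤ 2 * ε * x * Real.exp (2 * x) := by
            apply mul_le_mul_of_nonneg_right _ (Real.exp_pos _).le
            nlinarith
        _ = 2 * ε * (x * Real.exp (2 * x)) := by ring
    linarith
  have hx_exp : x * Real.exp (2 * x) ≤ Real.exp (3 * x) := by
    have h1 : x ≤ Real.exp x := by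
      have := Real.add_one_le_exp x; linarith
    have h2 : Real.exp x * Real.exp (2 * x) = Real.exp (3 * x) := by
      rw [← Real.exp_add]; ring_nf
    nlinarith [Real.exp_pos (2 * x)]
  -- bound exp(3x) = t^3 via t ≤ -log ε ≤ 6 ε^{-1/6}
  have hsq0 : 0 < Real.sqrt ε := Real.sqrt_pos.2 hε0
  set b := (ε⁻¹) ^ ((1:ℝ)/6) with hbdef
  have hb0 : 0 < b := Real.rpow_pos_of_pos (inv_pos.2 hε0) _
  have hτ : -Real.log ε ≤ 6 * b := by
    have h1 : -Real.log ε = Real.log ε⁻¹ := by rw [Real.log_inv]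
    have h2 : Real.log ε⁻¹ = 6 * Real.log b := by
      rw [hbdef, Real.log_rpow (inv_pos.2 hε0)]; ring
    have h3 : Real.log b ≤ b := by
      have := Real.log_le_sub_one_of_pos hb0; linarith
    rw [h1, h2]; linarith
  have hb3 : b ^ 3 = (Real.sqrt ε)⁻¹ := by
    rw [hbdef, ← Real.rpow_natCast ((ε⁻¹) ^ ((1:ℝ)/6)) 3,
      ← Real.rpow_mul (inv_pos.2 hε0).le]
    norm_num
    rw [← Real.sqrt_eq_rpow, Real.sqrt_inv]
  have ht3 : Real.exp (3 * x) ≤ 216 * (Real.sqrt ε)⁻¹ := by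
    have h1 : Real.exp (3 * x) = t ^ (3:ℕ) := by
      rw [htx, ← Real.exp_nat_mul]; norm_num
    have h2 : t ≤ 6 * b := le_trans ht2 hτ
    have h3 : t ^ (3:ℕ) ≤ (6 * b) ^ (3:ℕ) := pow_le_pow_left₀ ht0.le h2 3
    have h4 : (6 * b) ^ (3:ℕ) = 216 * b ^ 3 := by ring
    rw [h1, ← hb3]; rw [h4] at h3; linarith
  have hfinal : 2 * ε * (216 * (Real.sqrt ε)⁻¹) = 432 * Real.sqrt ε := by
    have hs : Real.sqrt ε * Real.sqrt ε = ε := Real.mul_self_sqrt hε0.le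
    field_simp
    nlinarith
  rw [habs]
  calc t ^ (1/α) - t ≤ 2 * ε * (x * Real.exp (2 * x)) := key
    _ ≤ 2 * ε * Real.exp (3 * x) := by
        apply mul_le_mul_of_nonneg_left hx_exp; linarith
    _ ≤ 2 * ε * (216 * (Real.sqrt ε)⁻¹) := by
        apply mul_le_mul_of_nonneg_left ht3; linarith
    _ = 432 * Real.sqrt ε := hfinal
end

section
/- Let τ_α = −ln(1−α) for α ∈ (0,1), and let ξ_α be the largest solution of y^{(d+2)α} e^{-y^{2α}/4} = C_α sin(απ) with ξ_α ≥ [2(d+2)]^{1/(2α)}, where C_α > 0 is bounded away from 0 and ∞ as α → 1. Then ξ_α^{2α}/4 ∼ −ln(1−α) as α → 1⁻, i.e. the ratio (ξ_α^{2α}/4)/(−ln(1−α)) tends to 1. -/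
open Real Set Filter Asymptotics Topology

/-
Write `u = ξ^{2α}/4` and `L = -log(1-α)`. Taking logarithms, the defining equation becomes
`u = (d+2)/2 · log u + v` with `v = (d+2)/2 · log 4 - log C - log sin(απ)`. Since `C` is bounded
away from `0` and `∞` and `sin(απ) = sin(π(1-α))` lies between `2(1-α)` and `π(1-α)`, `v - L` is
bounded, so `v ~ L`. As `u ≥ v → ∞`, the term `log u` is `o(u)`, whence `u ~ v ~ L`.
-/

theorem Asymptotics.isEquivalent_of_abs_sub_le {α : Type*} {l : Filter α} {f g : α → ℝ}
    (M : ℝ) (hfg : ∀ᶠ x in l, |f x - g x| ≤ M) (hg : Tendsto g l atTop) : f ~[l] g := by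
  have hbdd : (f - g) =O[l] (fun _ => (1 : ℝ)) :=
    IsBigO.of_bound M (hfg.mono fun x hx => by simpa using hx)
  exact hbdd.trans_isLittleO ((isLittleO_one_left_iff ℝ).2 (tendsto_norm_atTop_atTop.comp hg))

theorem Asymptotics.isEquivalent_of_eq_mul_log_add {α : Type*} {l : Filter α} {u v : α → ℝ}
    {k : ℝ} (hk : 0 ≤ k) (hu : ∀ᶠ x in l, 1 ≤ u x)
    (huv : ∀ᶠ x in l, u x = k * log (u x) + v x) (hv : Tendsto v l atTop) : u ~[l] v := by
  have hu_top : Tendsto u l atTop := by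
    refine tendsto_atTop_mono' l ?_ hv
    filter_upwards [hu, huv] with x hx hx'
    nlinarith [log_nonneg hx]
  have hlog : (fun x => k * log (u x)) =o[l] u :=
    ((isLittleO_log_id_atTop.comp_tendsto hu_top).const_mul_left k)
  refine IsEquivalent.symm (hlog.neg_left.congr' ?_ EventuallyEq.rfl)
  filter_upwards [huv] with x hx
  simp only [Pi.sub_apply]
  linarith

theorem tendsto_neg_log_one_sub_nhdsLT_one :
    Tendsto (fun x : ℝ => -log (1 - x)) (𝓝[<] 1) atTop := by
  have h : Tendsto (fun x : ℝ => 1 - x) (𝓝[<] 1) (𝓝[>] 0) := by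
    refine tendsto_nhdsWithin_of_tendsto_nhds_of_eventually_within _ ?_ ?_
    · simpa using ((continuous_sub_left (1 : ℝ)).tendsto 1).mono_left nhdsWithin_le_nhds
    · filter_upwards [self_mem_nhdsWithin] with x (hx : x < 1)
      simpa using hx
  exact tendsto_neg_atBot_atTop.comp (tendsto_log_nhdsGT_zero.comp h)

theorem Real.abs_log_sin_pi_mul_sub_log_le {x : ℝ} (hx₀ : 0 < x) (hx : x ≤ 1 / 2) :
    |log (sin (π * x)) - log x| ≤ log π := by
  have hπx : 0 ≤ π * x := by positivity
  have hlower : 2 * x ≤ sin (π * x) := by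
    have := mul_le_sin hπx (by nlinarith [pi_pos])
    rwa [show 2 / π * (π * x) = 2 * x by field_simp] at this
  have hupper : sin (π * x) ≤ π * x := sin_le hπx
  have hsin : 0 < sin (π * x) := by linarith
  rw [← log_div hsin.ne' hx₀.ne', abs_le]
  constructor
  · have h2 : log 2 ≤ log (sin (π * x) / x) := log_le_log two_pos ((le_div_iff₀ hx₀).2 hlower)
    linarith [log_nonneg one_le_two, log_le_log two_pos two_le_pi]
  · exact log_le_log (by positivity) ((div_le_iff₀ hx₀).2 hupper)

theorem Real.abs_log_mul_sin_mul_pi_sub_log_one_sub_le {c₁ c₂ c α : ℝ} (hc₁ : 0 < c₁)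
    (hc : c ∈ Icc c₁ c₂) (hα : α ∈ Ioo (1 / 2 : ℝ) 1) :
    |log (c * sin (α * π)) - log (1 - α)| ≤ max |log c₁| |log c₂| + log π := by
  have hc₀ : 0 < c := hc₁.trans_le hc.1
  have hsin : sin (α * π) = sin (π * (1 - α)) := by rw [← sin_pi_sub]; ring_nf
  have hsin₀ : 0 < sin (π * (1 - α)) :=
    sin_pos_of_pos_of_lt_pi (by nlinarith [hα.2, pi_pos]) (by nlinarith [hα.1, pi_pos])
  have hsin_log := abs_log_sin_pi_mul_sub_log_le (x := 1 - α) (by linarith [hα.2])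
    (by linarith [hα.1])
  have hc_log := abs_le_max_abs_abs (log_le_log hc₁ hc.1) (log_le_log hc₀ hc.2)
  rw [hsin, log_mul hc₀.ne' hsin₀.ne', add_sub_assoc]
  exact (abs_add_le _ _).trans (add_le_add hc_log hsin_log)

theorem Real.rpow_div_four_eq_mul_log_add {y s t p c : ℝ} (hy : 0 < y) (hs : s = p * t)
    (h : y ^ s * exp (-y ^ t / 4) = c) :
    y ^ t / 4 = p * log (y ^ t / 4) + (p * log 4 - log c) := by
  have hyt : 0 < y ^ t := rpow_pos_of_pos hy t
  rw [hs, mul_comm p, rpow_mul hy.le] at h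
  rw [← h, log_mul (by positivity) (exp_ne_zero _), log_exp, log_rpow hyt,
    log_div hyt.ne' four_ne_zero]
  ring

theorem stmt_18_general (d : ℕ) (C ξ : ℝ → ℝ)
    (hC : ∃ c₁ c₂ : ℝ, 0 < c₁ ∧ ∀ α ∈ Set.Ioo (1/2 : ℝ) 1, c₁ ≤ C α ∧ C α ≤ c₂)
    (hξ : ∀ α ∈ Set.Ioo (1/2 : ℝ) 1,
      (2 * ((d : ℝ) + 2)) ^ (1 / (2 * α)) ≤ ξ α ∧
      (ξ α) ^ (((d : ℝ) + 2) * α) * Real.exp (-(ξ α) ^ (2 * α) / 4)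
        = C α * Real.sin (α * Real.pi) ∧
      ∀ y : ℝ, (2 * ((d : ℝ) + 2)) ^ (1 / (2 * α)) ≤ y →
        y ^ (((d : ℝ) + 2) * α) * Real.exp (-y ^ (2 * α) / 4)
          = C α * Real.sin (α * Real.pi) → y ≤ ξ α) :
    Filter.Tendsto (fun α => ((ξ α) ^ (2 * α) / 4) / (-Real.log (1 - α)))
      (nhdsWithin 1 (Set.Iio 1)) (nhds 1) := by
  obtain ⟨c₁, c₂, hc₁, hCb⟩ := hC
  set k : ℝ := ((d : ℝ) + 2) / 2
  set v : ℝ → ℝ := fun α => k * log 4 - log (C α * sin (α * π))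
  have hα : ∀ᶠ α in 𝓝[<] (1 : ℝ), α ∈ Ioo (1 / 2 : ℝ) 1 := Ioo_mem_nhdsLT_of_mem (by norm_num)
  have hu_ge : ∀ᶠ α in 𝓝[<] (1 : ℝ), 1 ≤ ξ α ^ (2 * α) / 4 := by
    filter_upwards [hα] with α hα
    have h2α : 0 < 2 * α := by linarith [hα.1]
    have h := (hξ α hα).1
    rw [one_div, rpow_inv_le_iff_of_pos (by positivity) (h.trans' (by positivity)) h2α] at h
    linarith
  have hu_eq : ∀ᶠ α in 𝓝[<] (1 : ℝ),
      ξ α ^ (2 * α) / 4 = k * log (ξ α ^ (2 * α) / 4) + v α := by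
    filter_upwards [hα] with α hα
    have hξ₀ : 0 < ξ α := ((hξ α hα).1).trans_lt' (by positivity)
    exact rpow_div_four_eq_mul_log_add hξ₀ (by ring) (hξ α hα).2.1
  have hvL : v ~[𝓝[<] 1] fun α => -log (1 - α) := by
    refine isEquivalent_of_abs_sub_le (k * log 4 + max |log c₁| |log c₂| + log π) ?_
      tendsto_neg_log_one_sub_nhdsLT_one
    filter_upwards [hα] with α hα
    have h := abs_log_mul_sin_mul_pi_sub_log_one_sub_le hc₁ (hCb α hα) hα
    have hk4 : 0 ≤ k * log 4 := by positivity
    show |k * log 4 - log (C α * sin (α * π)) - -log (1 - α)| ≤ _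
    rw [abs_le] at h ⊢
    constructor <;> linarith [h.1, h.2]
  have huL := (isEquivalent_of_eq_mul_log_add (by positivity) hu_ge hu_eq
    (hvL.symm.tendsto_atTop tendsto_neg_log_one_sub_nhdsLT_one)).trans hvL
  exact (isEquivalent_iff_tendsto_one
    (tendsto_neg_log_one_sub_nhdsLT_one.eventually_ne_atTop 0)).1 huL

theorem stmt_18 (d : ℕ) (hd : 1 ≤ d) (C ξ : ℝ → ℝ)
    (hC : ∃ c₁ c₂ : ℝ, 0 < c₁ ∧ ∀ α ∈ Set.Ioo (1/2 : ℝ) 1, c₁ ≤ C α ∧ C α ≤ c₂)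
    (hξ : ∀ α ∈ Set.Ioo (1/2 : ℝ) 1,
      (2 * ((d : ℝ) + 2)) ^ (1 / (2 * α)) ≤ ξ α ∧
      (ξ α) ^ (((d : ℝ) + 2) * α) * Real.exp (-(ξ α) ^ (2 * α) / 4)
        = C α * Real.sin (α * Real.pi) ∧
      ∀ y : ℝ, (2 * ((d : ℝ) + 2)) ^ (1 / (2 * α)) ≤ y →
        y ^ (((d : ℝ) + 2) * α) * Real.exp (-y ^ (2 * α) / 4)
          = C α * Real.sin (α * Real.pi) → y ≤ ξ α) :
    Filter.Tendsto (fun α => ((ξ α) ^ (2 * α) / 4) / (-Real.log (1 - α)))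
      (nhdsWithin 1 (Set.Iio 1)) (nhds 1) :=
  stmt_18_general d C ξ hC hξ
end
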